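/- A bipartite channel with trivial Alice input that is nonsignaling from Bob to Alice is semilocalizable, and hence realizable by local operations and shared entanglement (the other direction used in the proof that a bipartite resource type with a trivial input or output is LOSE-trivial): let E : M_{d_Y}(ℂ) → M_{d_A·d_B}(ℂ) be a CPTP map, with output on ℂ^{d_A} ⊗ ℂ^{d_B}, such that there is a density matrix σ_A on ℂ^{d_A} with Tr₂[E(ρ)] = Tr(ρ)·σ_A for every matrix ρ ∈ M_{d_Y}(ℂ). Then there exist m ≥ 1, a density matrix χ on ℂ^{d_A} ⊗ ℂᵐ, and a CPTP map Φ : M_{m·d_Y}(ℂ) → M_{d_B}(ℂ), such that E(ρ) = (id_{d_A} ⊗ Φ)(χ ⊗ ρ) for all ρ, where χ ⊗ ρ is regarded as a matrix on ℂ^{d_A} ⊗ (ℂᵐ ⊗ ℂ^{d_Y}). -/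

import Mathlib

/-!
Purify `σ_A` by the vector `Ψ = √σ_A` in `ℂ^{dA} ⊗ ℂ^{dA}` and let Bob undo `√σ_A`.
Reshape each Kraus operator `K_i` of `E` into `X_i : ℂ^{dB} → ℂ^{dA} ⊗ ℂ^{dY}`; nonsignaling
says exactly `Σ_i X_i X_iᴴ = σ_A ⊗ 1 = R²` with `R = √σ_A ⊗ 1`. Hence every `X_i` lies in the
range of `R`, and with a generalized inverse `G` of `R` we get `X_i = R (G X_i)`, where the
family `G X_i`, padded by the projection `1 - R G` onto the kernel of `R`, satisfies
`Σ Y_c Y_cᴴ = 1`. The transposes of the `Y_c` are Kraus operators of Bob's channel `Φ`.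
-/

open Matrix Kronecker ComplexOrder

/-- A map between matrix algebras is CPTP (a quantum channel) if it admits a Kraus
representation `E(ρ) = Σ_k K_k ρ K_k†` with `Σ_k K_k† K_k = I`. -/
def IsCPTP {α β : Type*} [Fintype α] [DecidableEq α] [Fintype β]
    (E : Matrix α α ℂ → Matrix β β ℂ) : Prop :=
  ∃ (N : ℕ) (K : Fin N → Matrix β α ℂ),
    (∀ ρ, E ρ = ∑ i, K i * ρ * (K i)ᴴ) ∧ ∑ i, (K i)ᴴ * K i = 1

/-- The partial trace over the second tensor factor:
`Tr₂(M) = Σ_j (I ⊗ ⟨e_j|) M (I ⊗ |e_j⟩)`. -/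
noncomputable def ptrace2 {α β : Type*} [Fintype β]
    (M : Matrix (α × β) (α × β) ℂ) : Matrix α α ℂ :=
  Matrix.of fun i j => ∑ l, M (i, l) (j, l)

open scoped MatrixOrder

namespace Matrix

theorem IsHermitian.exists_generalizedInverse {n : Type*} [Fintype n] [DecidableEq n]
    {R : Matrix n n ℂ} (hR : R.IsHermitian) :
    ∃ G : Matrix n n ℂ, G.IsHermitian ∧ Commute R G ∧ R * G * R = R := by
  have hcont (f : ℝ → ℝ) : ContinuousOn f (spectrum ℝ R) :=
    finite_real_spectrum.continuousOn f
  refine ⟨cfc (·⁻¹ : ℝ → ℝ) R, cfc_predicate _ R, ((Commute.refl R).cfc_real _).symm, ?_⟩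
  conv_rhs => rw [← cfc_id' ℝ R hR.isSelfAdjoint, ← cfc_congr fun x _ => mul_inv_mul_cancel x]
  rw [cfc_mul _ _ R (hcont _) (hcont _), cfc_mul _ _ R (hcont _) (hcont _),
    cfc_id' ℝ R hR.isSelfAdjoint]

theorem eq_zero_of_sum_mul_conjTranspose_eq_zero {ι n m : Type*} [Fintype ι] [Fintype n]
    [Fintype m] {A : ι → Matrix n m ℂ} (h : ∑ i, A i * (A i)ᴴ = 0) (i : ι) : A i = 0 := by
  have htr : ∑ i, (A i * (A i)ᴴ).trace = 0 := by rw [← trace_sum, h, trace_zero]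
  rw [Finset.sum_eq_zero_iff_of_nonneg fun j _ =>
    (posSemidef_self_mul_conjTranspose (A j)).trace_nonneg] at htr
  exact trace_mul_conjTranspose_self_eq_zero_iff.mp (htr i (Finset.mem_univ i))

theorem sum_mul_mul_conjTranspose {κ l n m : Type*} [Fintype κ] [Fintype n] [Fintype m]
    (M : Matrix l n ℂ) (Z : κ → Matrix n m ℂ) :
    ∑ k, M * Z k * (M * Z k)ᴴ = M * (∑ k, Z k * (Z k)ᴴ) * Mᴴ := by
  rw [Matrix.mul_sum, Matrix.sum_mul]
  simp only [conjTranspose_mul, Matrix.mul_assoc]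

theorem IsHermitian.exists_coisometry_factor {ι n β : Type*} [Fintype ι] [Fintype n]
    [DecidableEq n] [Fintype β] {R : Matrix n n ℂ} (hR : R.IsHermitian) {X : ι → Matrix n β ℂ}
    (hX : ∑ i, X i * (X i)ᴴ = R * R) (hβ : IsEmpty β → IsEmpty n) :
    ∃ Y : ι ⊕ n → Matrix n β ℂ, ∑ c, Y c * (Y c)ᴴ = 1 ∧ ∀ c, R * Y c = Sum.elim X 0 c := by
  classical
  rcases isEmpty_or_nonempty β with hβe | ⟨⟨b₀⟩⟩
  · have := hβ hβe
    exact ⟨Sum.elim X 0, Subsingleton.elim _ _, fun _ => Subsingleton.elim _ _⟩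
  obtain ⟨G, hG, hRG, hRGR⟩ := hR.exists_generalizedInverse
  set Q := 1 - R * G with hQ
  have hQR : Q * R = 0 := by rw [hQ, sub_mul, one_mul, hRGR, sub_self]
  have hRQ : R * Q = 0 := by rw [hQ, mul_sub, mul_one, hRG.eq, ← mul_assoc, hRGR, sub_self]
  have hQH : Qᴴ = Q := by
    rw [hQ, conjTranspose_sub, conjTranspose_one, conjTranspose_mul, hG.eq, hR.eq, hRG.eq]
  have hQX (i : ι) : Q * X i = 0 := by
    refine eq_zero_of_sum_mul_conjTranspose_eq_zero (A := fun i => Q * X i) ?_ i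
    rw [sum_mul_mul_conjTranspose, hX, ← Matrix.mul_assoc, hQR, Matrix.zero_mul, Matrix.zero_mul]
  refine ⟨Sum.elim (fun i => G * X i) (fun x => Q * single x b₀ (1 : ℂ)), ?_, ?_⟩
  · have hGRRG : G * (R * R) * G = R * G :=
      calc G * (R * R) * G = G * R * R * G := by simp only [Matrix.mul_assoc]
        _ = R * G := by rw [← hRG.eq, hRGR]
    have hQQ : Q * Q = Q := by
      nth_rewrite 1 [hQ]
      rw [sub_mul, Matrix.one_mul, hRG.eq, Matrix.mul_assoc, hRQ, Matrix.mul_zero, sub_zero]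
    rw [Fintype.sum_sum_type]
    simp only [Sum.elim_inl, Sum.elim_inr]
    rw [sum_mul_mul_conjTranspose, sum_mul_mul_conjTranspose, hX, hG.eq, hQH]
    simp only [conjTranspose_single, star_one, single_mul_single_same, mul_one, sum_single_one]
    rw [hGRRG, hQQ, hQ, add_sub_cancel]
  · rintro (i | x)
    · simp only [Sum.elim_inl]
      rw [← Matrix.mul_assoc, eq_comm, ← sub_eq_zero, ← hQX i, hQ, Matrix.sub_mul,
        Matrix.one_mul]
    · simp only [Sum.elim_inr, Pi.zero_apply]
      rw [← Matrix.mul_assoc, hRQ, Matrix.zero_mul]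

theorem IsHermitian.kronecker {m n : Type*} {A : Matrix m m ℂ} {B : Matrix n n ℂ}
    (hA : A.IsHermitian) (hB : B.IsHermitian) : (A ⊗ₖ B).IsHermitian := by
  rw [IsHermitian, conjTranspose_kronecker, hA.eq, hB.eq]

def reshuffle {α β γ : Type*} (K : Matrix (α × β) γ ℂ) : Matrix (α × γ) β ℂ :=
  of fun x b => K (x.1, b) x.2

theorem reshuffle_injective {α β γ : Type*} :
    Function.Injective (reshuffle : Matrix (α × β) γ ℂ → Matrix (α × γ) β ℂ) :=
  fun _ _ h => ext fun x y => congr_fun₂ h (x.1, y) x.2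

/-- The column `Ψ ⊗ 1_γ`, where the vector `Ψ ∈ ℂ^α ⊗ ℂ^μ` is stored as an `α × μ` matrix. -/
def vecTensorOne {α μ : Type*} (Ψ : Matrix α μ ℂ) (γ : Type*) [DecidableEq γ] :
    Matrix (α × (μ × γ)) γ ℂ :=
  of fun x y => Ψ x.1 x.2.1 * (1 : Matrix γ γ ℂ) x.2.2 y

theorem trace_vecMulVec_uncurry {α μ : Type*} [Fintype α] [Fintype μ] (Ψ : Matrix α μ ℂ) :
    (vecMulVec (Function.uncurry Ψ) (star (Function.uncurry Ψ))).trace = (Ψ * Ψᴴ).trace := by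
  simp only [trace, diag_apply, vecMulVec_apply, Pi.star_apply, RCLike.star_def,
    Fintype.sum_prod_type, mul_apply, conjTranspose_apply]
  rfl

theorem reindex_vecMulVec_kronecker {α μ γ : Type*} [Fintype γ] [DecidableEq γ]
    (Ψ : Matrix α μ ℂ) (ρ : Matrix γ γ ℂ) :
    reindex (Equiv.prodAssoc α μ γ) (Equiv.prodAssoc α μ γ)
        (vecMulVec (Function.uncurry Ψ) (star (Function.uncurry Ψ)) ⊗ₖ ρ) =
      vecTensorOne Ψ γ * ρ * (vecTensorOne Ψ γ)ᴴ := by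
  ext ⟨a, j, y⟩ ⟨a', j', y'⟩
  simp only [reindex_apply, submatrix_apply, Equiv.prodAssoc_symm_apply, kroneckerMap_apply,
    vecMulVec_apply, Function.uncurry, Pi.star_apply, RCLike.star_def, vecTensorOne, one_apply,
    mul_ite, mul_one, mul_zero, mul_apply, of_apply, ite_mul, zero_mul, Finset.sum_ite_eq,
    Finset.mem_univ, ↓reduceIte, conjTranspose_apply, apply_ite (starRingEnd ℂ), map_zero]
  ring

theorem reshuffle_one_kronecker_transpose_mul_vecTensorOne {α β γ μ : Type*} [Fintype α]
    [DecidableEq α] [Fintype γ] [DecidableEq γ] [Fintype μ]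
    (Ψ : Matrix α μ ℂ) (Y : Matrix (μ × γ) β ℂ) :
    reshuffle ((1 : Matrix α α ℂ) ⊗ₖ Yᵀ * vecTensorOne Ψ γ) = Ψ ⊗ₖ (1 : Matrix γ γ ℂ) * Y := by
  ext ⟨a, y⟩ b
  simp [reshuffle, vecTensorOne, mul_apply, one_apply, Fintype.sum_prod_type, mul_comm]

theorem sum_kraus_eq_sum_one_kronecker_of_factor {α β γ μ ι κ : Type*} [Fintype α]
    [DecidableEq α] [Fintype β] [Fintype γ] [DecidableEq γ] [Fintype μ] [Fintype ι] [Fintype κ]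
    {K : ι → Matrix (α × β) γ ℂ} {Ψ : Matrix α μ ℂ} {L : ι ⊕ κ → Matrix β (μ × γ) ℂ}
    (hL : ∀ c, (1 : Matrix α α ℂ) ⊗ₖ L c * vecTensorOne Ψ γ = Sum.elim K 0 c)
    (ρ : Matrix γ γ ℂ) :
    ∑ i, K i * ρ * (K i)ᴴ = ∑ c, (1 : Matrix α α ℂ) ⊗ₖ L c *
      reindex (Equiv.prodAssoc α μ γ) (Equiv.prodAssoc α μ γ)
        (vecMulVec (Function.uncurry Ψ) (star (Function.uncurry Ψ)) ⊗ₖ ρ) *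
      ((1 : Matrix α α ℂ) ⊗ₖ L c)ᴴ := by
  have hterm (c : ι ⊕ κ) :
      (1 : Matrix α α ℂ) ⊗ₖ L c * (vecTensorOne Ψ γ * ρ * (vecTensorOne Ψ γ)ᴴ) *
        ((1 : Matrix α α ℂ) ⊗ₖ L c)ᴴ = Sum.elim K 0 c * ρ * (Sum.elim K 0 c)ᴴ := by
    rw [← hL, conjTranspose_mul]
    simp only [Matrix.mul_assoc]
  simp only [reindex_vecMulVec_kronecker, hterm, Fintype.sum_sum_type, Sum.elim_inl,
    Sum.elim_inr, Pi.zero_apply, Matrix.zero_mul, Finset.sum_const_zero, add_zero]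

theorem exists_fin_kraus_of_factor {α β γ μ ι κ : Type*} [Fintype α] [DecidableEq α]
    [Fintype β] [Fintype γ] [DecidableEq γ] [Fintype μ] [DecidableEq μ] [Fintype ι] [Fintype κ]
    {K : ι → Matrix (α × β) γ ℂ} {Ψ : Matrix α μ ℂ} {Y : ι ⊕ κ → Matrix (μ × γ) β ℂ}
    (hYY : ∑ c, Y c * (Y c)ᴴ = 1)
    (hΨY : ∀ c, Ψ ⊗ₖ (1 : Matrix γ γ ℂ) * Y c = Sum.elim (fun i => reshuffle (K i)) 0 c) :
    ∃ (N : ℕ) (L : Fin N → Matrix β (μ × γ) ℂ), ∑ i, (L i)ᴴ * L i = 1 ∧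
      ∀ ρ : Matrix γ γ ℂ, ∑ i, K i * ρ * (K i)ᴴ = ∑ i, (1 : Matrix α α ℂ) ⊗ₖ L i *
        reindex (Equiv.prodAssoc α μ γ) (Equiv.prodAssoc α μ γ)
          (vecMulVec (Function.uncurry Ψ) (star (Function.uncurry Ψ)) ⊗ₖ ρ) *
        ((1 : Matrix α α ℂ) ⊗ₖ L i)ᴴ := by
  have hL (c : ι ⊕ κ) :
      (1 : Matrix α α ℂ) ⊗ₖ (Y c)ᵀ * vecTensorOne Ψ γ = Sum.elim K 0 c := by
    apply reshuffle_injective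
    rw [reshuffle_one_kronecker_transpose_mul_vecTensorOne, hΨY]
    cases c <;> rfl
  let e := Fintype.equivFin (ι ⊕ κ)
  refine ⟨_, fun i => (Y (e.symm i))ᵀ, ?_, fun ρ => ?_⟩
  · rw [e.symm.sum_comp fun c => ((Y c)ᵀ)ᴴ * (Y c)ᵀ]
    simp_rw [conjTranspose_transpose_eq_transpose_conjTranspose, ← transpose_mul,
      ← transpose_sum, hYY, transpose_one]
  · rw [sum_kraus_eq_sum_one_kronecker_of_factor hL, ← e.symm.sum_comp]

theorem sum_reshuffle_mul_conjTranspose_eq_kronecker {α β γ ι : Type*} [Fintype α] [Fintype β]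
    [Fintype γ] [DecidableEq γ] [Fintype ι] {K : ι → Matrix (α × β) γ ℂ} {σ : Matrix α α ℂ}
    (h : ∀ ρ : Matrix γ γ ℂ, ptrace2 (∑ i, K i * ρ * (K i)ᴴ) = ρ.trace • σ) :
    ∑ i, reshuffle (K i) * (reshuffle (K i))ᴴ = σ ⊗ₖ (1 : Matrix γ γ ℂ) := by
  ext ⟨a, y⟩ ⟨a', y'⟩
  have h₁ := congr_fun₂ (h (single y y' 1)) a a'
  simp only [ptrace2, sum_apply, mul_apply, single_apply, ite_and, mul_ite, mul_one, mul_zero,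
    Finset.sum_ite_eq, Finset.mem_univ, ↓reduceIte, conjTranspose_apply, RCLike.star_def,
    ite_mul, zero_mul, of_apply, trace, diag_apply, smul_apply, smul_eq_mul, one_mul, reshuffle,
    kroneckerMap_apply, one_apply] at h₁ ⊢
  rw [Finset.sum_comm, h₁]
  exact if_congr eq_comm rfl rfl

theorem isEmpty_of_sum_mul_conjTranspose_eq_kronecker_one {α β γ ι : Type*} [Fintype α]
    [Fintype β] [Fintype γ] [DecidableEq γ] [Fintype ι] {X : ι → Matrix (α × γ) β ℂ}
    {σ : Matrix α α ℂ} (hX : ∑ i, X i * (X i)ᴴ = σ ⊗ₖ (1 : Matrix γ γ ℂ)) (hσ : σ.trace ≠ 0)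
    (hβ : IsEmpty β) : IsEmpty (α × γ) := by
  have htr := congrArg trace hX
  simp only [Subsingleton.elim _ (0 : Matrix (α × γ) β ℂ), Matrix.zero_mul,
    Finset.sum_const_zero, trace_zero, trace_kronecker, trace_one] at htr
  have hγ : Fintype.card γ = 0 := by simpa [hσ, eq_comm] using htr
  have := Fintype.card_eq_zero_iff.mp hγ
  infer_instance

end Matrix

/-- a bipartite CPTP map `E : M_{dY}(ℂ) → M_{dA·dB}(ℂ)` (trivial Alice
input) that is nonsignaling from Bob to Alice, i.e. `Tr₂[E(ρ)] = Tr(ρ)·σ_A` for a fixed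
density matrix `σ_A`, is semilocalizable: `E(ρ) = (id_{dA} ⊗ Φ)(χ ⊗ ρ)` for some `m ≥ 1`,
density matrix `χ` on `ℂ^{dA} ⊗ ℂᵐ` and CPTP map `Φ : M_{m·dY}(ℂ) → M_{dB}(ℂ)` (given here
by its Kraus operators `K_i`, so that `id_{dA} ⊗ Φ` has Kraus operators `I_{dA} ⊗ K_i`;
`χ ⊗ ρ` on `(ℂ^{dA} ⊗ ℂᵐ) ⊗ ℂ^{dY}` is reassociated to `ℂ^{dA} ⊗ (ℂᵐ ⊗ ℂ^{dY})`). -/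
theorem stmt_12 (dA dB dY : ℕ)
    (E : Matrix (Fin dY) (Fin dY) ℂ → Matrix (Fin dA × Fin dB) (Fin dA × Fin dB) ℂ)
    (hE : IsCPTP E)
    (σA : Matrix (Fin dA) (Fin dA) ℂ) (hσ : σA.PosSemidef) (hσtr : σA.trace = 1)
    (hmarg : ∀ ρ, ptrace2 (E ρ) = ρ.trace • σA) :
    ∃ m : ℕ, 1 ≤ m ∧
      ∃ χ : Matrix (Fin dA × Fin m) (Fin dA × Fin m) ℂ, χ.PosSemidef ∧ χ.trace = 1 ∧
        ∃ (N : ℕ) (K : Fin N → Matrix (Fin dB) (Fin m × Fin dY) ℂ),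
          (∑ i, (K i)ᴴ * K i = 1) ∧
          ∀ ρ, E ρ = ∑ i,
            ((1 : Matrix (Fin dA) (Fin dA) ℂ) ⊗ₖ K i) *
              (Matrix.reindex (Equiv.prodAssoc (Fin dA) (Fin m) (Fin dY))
                (Equiv.prodAssoc (Fin dA) (Fin m) (Fin dY)) (χ ⊗ₖ ρ)) *
              ((1 : Matrix (Fin dA) (Fin dA) ℂ) ⊗ₖ K i)ᴴ := by
  obtain ⟨N, K, hEK, -⟩ := hE
  have hX := sum_reshuffle_mul_conjTranspose_eq_kronecker (K := K) fun ρ => hEK ρ ▸ hmarg ρ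
  set Ψ := CFC.sqrt σA
  have hΨ : Ψ.IsHermitian := (CFC.sqrt_nonneg σA).posSemidef.isHermitian
  have hΨσ : Ψ * Ψ = σA := CFC.sqrt_mul_sqrt_self σA hσ.nonneg
  have hR : Ψ ⊗ₖ (1 : Matrix (Fin dY) (Fin dY) ℂ) * Ψ ⊗ₖ 1 = σA ⊗ₖ 1 := by
    rw [← mul_kronecker_mul, hΨσ, Matrix.mul_one]
  obtain ⟨Y, hYY, hΨY⟩ := (hΨ.kronecker isHermitian_one).exists_coisometry_factor
    (hX.trans hR.symm) (isEmpty_of_sum_mul_conjTranspose_eq_kronecker_one hX (by simp [hσtr]))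
  obtain ⟨N', L, hLL, hEL⟩ := exists_fin_kraus_of_factor hYY hΨY
  refine ⟨dA, ?_, vecMulVec (Function.uncurry Ψ) (star (Function.uncurry Ψ)),
    posSemidef_vecMulVec_self_star _, ?_, N', L, hLL, fun ρ => (hEK ρ).trans (hEL ρ)⟩
  · exact Nat.one_le_iff_ne_zero.mpr (by rintro rfl; simp [trace] at hσtr)
  · rw [trace_vecMulVec_uncurry, hΨ.eq, hΨσ, hσtr]
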